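/- arXiv:1404.2694 — 2 statements merged into one kernel-verified Lean document; each statement's English description precedes it below -/
import Mathlib

section
/- Let σ be a positive Borel measure on ℝⁿ, let Q₀ be a dyadic cube, let f ∈ L^p(dσ) be nonnegative and supported in Q₀, and let F be the collection of principal cubes for the pair (f,σ). Then for every F ∈ F, the children satisfy ∑_{F' ∈ ch_F(F)} σ(F') ≤ σ(F)/2. -/
open MeasureTheory ENNReal Set
open scoped BigOperators NNReal

noncomputable section

/-- Points of `ℝⁿ`, realized as functions `Fin n → ℝ`. -/
abbrev RN (n : ℕ) := Fin n → ℝ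

/-- A dyadic cube `Q = 2^{-k}(m + [0,1)^n)` in `ℝⁿ`, recorded by its generation `k`
and lower-left corner `m`. -/
structure DyadicCube (n : ℕ) where
  k : ℤ
  m : Fin n → ℤ

namespace DyadicCube

variable {n : ℕ}

/-- The set of points of the dyadic cube `2^{-k}(m + [0,1)^n)`. -/
def carrier (Q : DyadicCube n) : Set (RN n) :=
  {x | ∀ i, (Q.m i : ℝ) * 2 ^ (-Q.k) ≤ x i ∧ x i < ((Q.m i : ℝ) + 1) * 2 ^ (-Q.k)}

instance : Countable (DyadicCube n) := by
  have h : Function.Injective fun Q : DyadicCube n => (Q.k, Q.m) := by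
    intro a b hab
    cases a; cases b
    simp only [Prod.mk.injEq] at hab
    simp [hab.1, hab.2]
  exact h.countable

/-- The indicator function `1_Q` of a dyadic cube, with values in `ℝ≥0∞`. -/
def indFun (Q : DyadicCube n) : RN n → ℝ≥0∞ :=
  Q.carrier.indicator 1

/-- The dual exponent `p' = p/(p-1)`. -/
def dual (p : ℝ) : ℝ := p / (p - 1)

open Classical in
/-- The kernel `K(Q,μ)` given by `K(Q,μ)(Q') = K(Q') μ(Q')` for `Q' ⊆ Q` and `0` otherwise. -/
def KQ (K : DyadicCube n → ℝ≥0∞) (μ : Measure (RN n)) (Q : DyadicCube n) :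
    DyadicCube n → ℝ≥0∞ :=
  fun Q' => if Q'.carrier ⊆ Q.carrier then K Q' * μ Q'.carrier else 0

open Classical in
/-- The function `∑_{Q' ⊆ Q} K(Q') μ(Q') 1_{Q'}(x)`. -/
def kernelSum (K : DyadicCube n → ℝ≥0∞) (μ : Measure (RN n)) (Q : DyadicCube n)
    (x : RN n) : ℝ≥0∞ :=
  ∑' Q' : DyadicCube n,
    (if Q'.carrier ⊆ Q.carrier then K Q' * μ Q'.carrier else 0) * indFun Q' x

open Classical in
/-- The function `K̄_μ(Q)(x) = μ(Q)⁻¹ ∑_{Q' ⊆ Q} K(Q') μ(Q') 1_{Q'}(x)`, interpreted as `0`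
when `μ(Q) = 0`. -/
def kbar (K : DyadicCube n → ℝ≥0∞) (μ : Measure (RN n)) (Q : DyadicCube n)
    (x : RN n) : ℝ≥0∞ :=
  if μ Q.carrier = 0 then 0 else (μ Q.carrier)⁻¹ * kernelSum K μ Q x

/-- The discrete Wolff potential
`W^p_{K,μ}[ν](x) = ∑_Q K(Q) μ(Q) (∫_Q K̄_μ(Q) dν)^{p-1} 1_Q(x)`. -/
def wolff (K : DyadicCube n → ℝ≥0∞) (μ ν : Measure (RN n)) (p : ℝ) (x : RN n) : ℝ≥0∞ :=
  ∑' Q : DyadicCube n,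
    K Q * μ Q.carrier * (∫⁻ y in Q.carrier, kbar K μ Q y ∂ν) ^ (p - 1) * indFun Q x

/-- The average `⨍_Q f dμ = μ(Q)⁻¹ ∫_Q f dμ` (in `ℝ≥0∞`; it is `0` when `μ(Q) = 0`). -/
def avg (σ : Measure (RN n)) (f : RN n → ℝ) (Q : DyadicCube n) : ℝ≥0∞ :=
  (σ Q.carrier)⁻¹ * ∫⁻ x in Q.carrier, ENNReal.ofReal (f x) ∂σ

/-- The dyadic Hardy–Littlewood maximal operator
`M_σ f(x) = sup_{Q ∋ x} ⨍_Q |f| dσ`. -/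
def dyadicMaximal (σ : Measure (RN n)) (f : RN n → ℝ) (x : RN n) : ℝ≥0∞ :=
  ⨆ (Q : DyadicCube n) (_ : x ∈ Q.carrier), avg σ (fun y => |f y|) Q

/-- `ch_F(F)`: the maximal dyadic cubes `Q ⊆ F` with `⨍_Q f dσ > 2 ⨍_F f dσ`. -/
def chPrin (σ : Measure (RN n)) (f : RN n → ℝ) (F : DyadicCube n) : Set (DyadicCube n) :=
  {Q | Q.carrier ⊆ F.carrier ∧ 2 * avg σ f F < avg σ f Q ∧
    ∀ R : DyadicCube n, R.carrier ⊆ F.carrier → Q.carrier ⊆ R.carrier →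
      2 * avg σ f F < avg σ f R → R = Q}

/-- The generations `F^k` of principal cubes for the pair `(f, σ)` starting from `Q₀`. -/
def prinLevel (σ : Measure (RN n)) (f : RN n → ℝ) (Q₀ : DyadicCube n) :
    ℕ → Set (DyadicCube n)
  | 0 => {Q₀}
  | k + 1 => ⋃ F ∈ prinLevel σ f Q₀ k, chPrin σ f F

/-- The collection `F = ⋃_k F^k` of principal cubes for the pair `(f, σ)`. -/
def principal (σ : Measure (RN n)) (f : RN n → ℝ) (Q₀ : DyadicCube n) :
    Set (DyadicCube n) :=
  ⋃ k, prinLevel σ f Q₀ k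

/-- `F` is the stopping parent `π_F(Q)` of `Q`: the minimal principal cube containing `Q`. -/
def IsStoppingParent (σ : Measure (RN n)) (f : RN n → ℝ) (Q₀ Q F : DyadicCube n) : Prop :=
  F ∈ principal σ f Q₀ ∧ Q.carrier ⊆ F.carrier ∧
    ∀ F' ∈ principal σ f Q₀, Q.carrier ⊆ F'.carrier → F.carrier ⊆ F'.carrier

open Classical in
/-- The stopping parent `π_F(Q)`, the minimal principal cube containing `Q`
(junk value `Q₀` if there is none). -/
def stoppingParent (σ : Measure (RN n)) (f : RN n → ℝ) (Q₀ Q : DyadicCube n) :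
    DyadicCube n :=
  if h : ∃ F, IsStoppingParent σ f Q₀ Q F then h.choose else Q₀

/-- The set `E_F(F) = F \ ⋃_{F' ∈ ch_F(F)} F'`. -/
def ESet (σ : Measure (RN n)) (f : RN n → ℝ) (F : DyadicCube n) : Set (RN n) :=
  F.carrier \ ⋃ F' ∈ chPrin σ f F, F'.carrier

/-- `ch^i_{F₃}(H) = {H' ∈ ch_{F₃}(H) : π_{F₃}(π_{F_i}(H')) = H}`. -/
def chStop (σi σ₃ : Measure (RN n)) (fi f₃ : RN n → ℝ) (Q₀ H : DyadicCube n) :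
    Set (DyadicCube n) :=
  {H' | H' ∈ chPrin σ₃ f₃ H ∧
    stoppingParent σ₃ f₃ Q₀ (stoppingParent σi fi Q₀ H') = H}

/-- The modified function
`f_i^H = f_i 1_{E_{F₃}(H)} + ∑_{H' ∈ ch^i_{F₃}(H)} (⨍_{H'} f_i dσ_i) 1_{H'}`. -/
def modFun (σi σ₃ : Measure (RN n)) (fi f₃ : RN n → ℝ) (Q₀ H : DyadicCube n)
    (x : RN n) : ℝ≥0∞ :=
  (ESet σ₃ f₃ H).indicator (fun y => ENNReal.ofReal (fi y)) x +
    ∑' H' : chStop σi σ₃ fi f₃ Q₀ H,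
      (H'.1.carrier.indicator (fun _ => avg σi fi H'.1) x)

/-- The bilinear embedding inequality
`∑_Q K(Q) |∫_Q f₁ dσ₁| |∫_Q f₂ dσ₂| ≤ c ‖f₁‖_{L^{p₁}(σ₁)} ‖f₂‖_{L^{p₂}(σ₂)}`. -/
def bilinearEmbedding (K : DyadicCube n → ℝ≥0∞) (σ₁ σ₂ : Measure (RN n))
    (p₁ p₂ : ℝ) (c : ℝ≥0∞) : Prop :=
  ∀ f₁ f₂ : RN n → ℝ,
    MemLp f₁ (ENNReal.ofReal p₁) σ₁ → MemLp f₂ (ENNReal.ofReal p₂) σ₂ →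
    (∑' Q : DyadicCube n,
        K Q * ENNReal.ofReal |∫ x in Q.carrier, f₁ x ∂σ₁| *
          ENNReal.ofReal |∫ x in Q.carrier, f₂ x ∂σ₂|) ≤
      c * eLpNorm f₁ (ENNReal.ofReal p₁) σ₁ * eLpNorm f₂ (ENNReal.ofReal p₂) σ₂

/-- The trilinear embedding inequality
`∑_Q K(Q) ∏_i |∫_Q f_i dσ_i| ≤ c ∏_i ‖f_i‖_{L^{p_i}(σ_i)}`. -/
def trilinearEmbedding (K : DyadicCube n → ℝ≥0∞) (σ : Fin 3 → Measure (RN n))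
    (p : Fin 3 → ℝ) (c : ℝ≥0∞) : Prop :=
  ∀ f : (i : Fin 3) → RN n → ℝ,
    (∀ i, MemLp (f i) (ENNReal.ofReal (p i)) (σ i)) →
    (∑' Q : DyadicCube n,
        K Q * ∏ i : Fin 3, ENNReal.ofReal |∫ x in Q.carrier, f i x ∂(σ i)|) ≤
      c * ∏ i : Fin 3, eLpNorm (f i) (ENNReal.ofReal (p i)) (σ i)

/-- Sawyer's checking condition for the pair `(σ₁, σ₂)`, with the finiteness clauses. -/
def sawyerTest (K : DyadicCube n → ℝ≥0∞) (σ₁ σ₂ : Measure (RN n))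
    (p₁ p₂ : ℝ) (c : ℝ≥0∞) : Prop :=
  ∀ Q : DyadicCube n,
    ((∫⁻ x in Q.carrier, kernelSum K σ₁ Q x ^ dual p₂ ∂σ₂) ^ (1 / dual p₂) ≤
        c * σ₁ Q.carrier ^ (1 / p₁) ∧ c * σ₁ Q.carrier ^ (1 / p₁) < ⊤) ∧
    ((∫⁻ x in Q.carrier, kernelSum K σ₂ Q x ^ dual p₁ ∂σ₁) ^ (1 / dual p₁) ≤
        c * σ₂ Q.carrier ^ (1 / p₂) ∧ c * σ₂ Q.carrier ^ (1 / p₂) < ⊤)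

/-- The Wolff-potential checking condition for the pair `(σ₁, σ₂)`:
`‖W^{p₂'}_{K,σ₂}[σ₁]^{1/p₂'}‖_{L^r(σ₁)} ≤ c` and `‖W^{p₁'}_{K,σ₁}[σ₂]^{1/p₁'}‖_{L^r(σ₂)} ≤ c`. -/
def wolffTest (K : DyadicCube n → ℝ≥0∞) (σ₁ σ₂ : Measure (RN n))
    (p₁ p₂ r : ℝ) (c : ℝ≥0∞) : Prop :=
  (∫⁻ x, (wolff K σ₂ σ₁ (dual p₂) x ^ (1 / dual p₂)) ^ r ∂σ₁) ^ (1 / r) ≤ c ∧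
  (∫⁻ x, (wolff K σ₁ σ₂ (dual p₁) x ^ (1 / dual p₁)) ^ r ∂σ₂) ^ (1 / r) ≤ c

/-- Condition (b) of the trilinear embedding theorem, without the finiteness clauses. -/
def trilinearTestLe (K : DyadicCube n → ℝ≥0∞) (σ : Fin 3 → Measure (RN n))
    (p : Fin 3 → ℝ) (c : ℝ≥0∞) : Prop :=
  ∀ e : Equiv.Perm (Fin 3),
    (1 ≤ 1 / p (e 0) + 1 / p (e 1) → ∀ Q : DyadicCube n,
      (∫⁻ x in Q.carrier,
          kernelSum (KQ K (σ (e 2)) Q) (σ (e 0)) Q x ^ dual (p (e 1)) ∂(σ (e 1))) ^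
            (1 / dual (p (e 1))) ≤
        c * σ (e 0) Q.carrier ^ (1 / p (e 0)) * σ (e 2) Q.carrier ^ (1 / p (e 2)) ∧
      (∫⁻ x in Q.carrier,
          kernelSum (KQ K (σ (e 2)) Q) (σ (e 1)) Q x ^ dual (p (e 0)) ∂(σ (e 0))) ^
            (1 / dual (p (e 0))) ≤
        c * σ (e 1) Q.carrier ^ (1 / p (e 1)) * σ (e 2) Q.carrier ^ (1 / p (e 2))) ∧
    (1 / p (e 0) + 1 / p (e 1) < 1 → ∀ Q : DyadicCube n, ∀ r : ℝ,
      1 / r + 1 / p (e 0) + 1 / p (e 1) = 1 →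
      (∫⁻ x, (wolff (KQ K (σ (e 2)) Q) (σ (e 1)) (σ (e 0)) (dual (p (e 1))) x ^
          (1 / dual (p (e 1)))) ^ r ∂(σ (e 0))) ^ (1 / r) ≤
        c * σ (e 2) Q.carrier ^ (1 / p (e 2)) ∧
      (∫⁻ x, (wolff (KQ K (σ (e 2)) Q) (σ (e 0)) (σ (e 1)) (dual (p (e 0))) x ^
          (1 / dual (p (e 0)))) ^ r ∂(σ (e 1))) ^ (1 / r) ≤
        c * σ (e 2) Q.carrier ^ (1 / p (e 2)))

/-- Condition (b) of the trilinear embedding theorem, with the finiteness clauses. -/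
def trilinearTest (K : DyadicCube n → ℝ≥0∞) (σ : Fin 3 → Measure (RN n))
    (p : Fin 3 → ℝ) (c : ℝ≥0∞) : Prop :=
  trilinearTestLe K σ p c ∧
  ∀ e : Equiv.Perm (Fin 3),
    (1 ≤ 1 / p (e 0) + 1 / p (e 1) → ∀ Q : DyadicCube n,
      c * σ (e 0) Q.carrier ^ (1 / p (e 0)) * σ (e 2) Q.carrier ^ (1 / p (e 2)) < ⊤ ∧
      c * σ (e 1) Q.carrier ^ (1 / p (e 1)) * σ (e 2) Q.carrier ^ (1 / p (e 2)) < ⊤) ∧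
    (1 / p (e 0) + 1 / p (e 1) < 1 → ∀ Q : DyadicCube n,
      c * σ (e 2) Q.carrier ^ (1 / p (e 2)) < ⊤)

end DyadicCube

/-! Every child `F'` of `F` has `⨍_{F'} f > 2 ⨍_F f`, i.e. `2 (⨍_F f) σ(F') ≤ ∫_{F'} f`. Two dyadic
cubes are nested or disjoint, so maximality makes the children pairwise disjoint; summing gives
`2 (⨍_F f) ∑ σ(F') ≤ ∫_F f = (⨍_F f) σ(F)`, and a child exists only if `0 < ⨍_F f < ∞`. -/

lemma Ico_zmul_subset_of_mem {a b c : ℤ} {s x : ℝ} (hs : 0 < s)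
    (hab : x ∈ Ico (a * s) (b * s)) (hc : x ∈ Ico (c * s) ((c + 1) * s)) :
    Ico (c * s) ((c + 1) * s) ⊆ Ico (a * s) (b * s) := by
  have hac : a ≤ c := by
    have : (a : ℝ) < c + 1 := lt_of_mul_lt_mul_right (hab.1.trans_lt hc.2) hs.le
    exact Int.lt_add_one_iff.mp (by exact_mod_cast this)
  have hcb : c + 1 ≤ b := by
    have : (c : ℝ) < b := lt_of_mul_lt_mul_right (hc.1.trans_lt hab.2) hs.le
    exact Int.add_one_le_iff.mpr (by exact_mod_cast this)
  exact Ico_subset_Ico (by gcongr) (by gcongr; exact_mod_cast hcb)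

namespace DyadicCube

variable {n : ℕ}

lemma carrier_eq_pi (Q : DyadicCube n) :
    Q.carrier = univ.pi fun i =>
      Ico ((Q.m i : ℝ) * (2 : ℝ) ^ (-Q.k)) (((Q.m i : ℝ) + 1) * (2 : ℝ) ^ (-Q.k)) := by
  ext x
  simp [carrier]

lemma carrier_subset_of_k_le {Q Q' : DyadicCube n} (hk : Q.k ≤ Q'.k) {x : RN n}
    (hx : x ∈ Q.carrier) (hx' : x ∈ Q'.carrier) : Q'.carrier ⊆ Q.carrier := by
  obtain ⟨D, hD⟩ := Int.eq_ofNat_of_zero_le (sub_nonneg.mpr hk)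
  have hscale : (2 : ℝ) ^ (-Q.k) = 2 ^ D * 2 ^ (-Q'.k) := by
    rw [← zpow_natCast, ← hD, ← zpow_add₀ two_ne_zero]
    ring_nf
  simp only [carrier_eq_pi] at hx hx' ⊢
  refine pi_mono fun i _ => ?_
  have hcube : x i ∈ Ico (((Q.m i * 2 ^ D : ℤ) : ℝ) * 2 ^ (-Q'.k))
      ((((Q.m i + 1) * 2 ^ D : ℤ) : ℝ) * 2 ^ (-Q'.k)) := by
    convert hx i (mem_univ i) using 2 <;> push_cast <;> rw [hscale] <;> ring
  convert Ico_zmul_subset_of_mem (by positivity) hcube (hx' i (mem_univ i)) using 2 <;>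
    push_cast <;> rw [hscale] <;> ring

lemma carrier_subset_or_subset_of_mem {Q Q' : DyadicCube n} {x : RN n}
    (hx : x ∈ Q.carrier) (hx' : x ∈ Q'.carrier) :
    Q.carrier ⊆ Q'.carrier ∨ Q'.carrier ⊆ Q.carrier := by
  rcases le_total Q.k Q'.k with hk | hk
  · exact Or.inr (carrier_subset_of_k_le hk hx hx')
  · exact Or.inl (carrier_subset_of_k_le hk hx' hx)

lemma measurableSet_carrier (Q : DyadicCube n) : MeasurableSet Q.carrier := by
  rw [carrier_eq_pi]
  exact MeasurableSet.univ_pi fun _ => measurableSet_Ico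

lemma pairwiseDisjoint_chPrin (σ : Measure (RN n)) (f : RN n → ℝ) (F : DyadicCube n) :
    (chPrin σ f F).PairwiseDisjoint carrier := by
  intro F₁ h₁ F₂ h₂ hne
  refine Set.disjoint_left.mpr fun x hx₁ hx₂ => ?_
  rcases carrier_subset_or_subset_of_mem hx₁ hx₂ with hsub | hsub
  · exact hne (h₁.2.2 F₂ h₂.1 hsub h₂.2.1).symm
  · exact hne (h₂.2.2 F₁ h₁.1 hsub h₁.2.1)

section Averages

variable {σ : Measure (RN n)} {f : RN n → ℝ}

lemma setLIntegral_eq_avg_mul {Q : DyadicCube n} (hQ : σ Q.carrier ≠ ⊤) :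
    ∫⁻ x in Q.carrier, ENNReal.ofReal (f x) ∂σ = avg σ f Q * σ Q.carrier := by
  by_cases h0 : σ Q.carrier = 0
  · simp [Measure.restrict_eq_zero.mpr h0, h0]
  · rw [avg, mul_comm, ← mul_assoc, ENNReal.mul_inv_cancel h0 hQ, one_mul]

lemma mul_measure_le_setLIntegral_of_le_avg {Q : DyadicCube n} {c : ℝ≥0∞}
    (hQ : σ Q.carrier ≠ ⊤) (hc : c ≤ avg σ f Q) :
    c * σ Q.carrier ≤ ∫⁻ x in Q.carrier, ENNReal.ofReal (f x) ∂σ := by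
  rw [setLIntegral_eq_avg_mul hQ]
  exact mul_le_mul_left hc _

lemma two_mul_avg_mul_tsum_measure_chPrin_le {F : DyadicCube n} (hF : σ F.carrier ≠ ⊤) :
    2 * avg σ f F * ∑' F' : chPrin σ f F, σ F'.1.carrier ≤
      ∫⁻ x in F.carrier, ENNReal.ofReal (f x) ∂σ := by
  rw [← ENNReal.tsum_mul_left]
  calc ∑' F' : chPrin σ f F, 2 * avg σ f F * σ F'.1.carrier
      ≤ ∑' F' : chPrin σ f F, ∫⁻ x in F'.1.carrier, ENNReal.ofReal (f x) ∂σ :=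
        ENNReal.tsum_le_tsum fun F' => mul_measure_le_setLIntegral_of_le_avg
          (ne_top_of_le_ne_top hF (measure_mono F'.2.1)) F'.2.2.1.le
    _ = ∫⁻ x in ⋃ F' ∈ chPrin σ f F, F'.carrier, ENNReal.ofReal (f x) ∂σ :=
        (lintegral_biUnion (to_countable _) (fun F' _ => measurableSet_carrier F')
          (pairwiseDisjoint_chPrin σ f F) _).symm
    _ ≤ ∫⁻ x in F.carrier, ENNReal.ofReal (f x) ∂σ :=
        lintegral_mono_set (iUnion₂_subset fun _ hF' => hF'.1)

lemma avg_ne_top_of_mem_chPrin {F F₀ : DyadicCube n} (hF₀ : F₀ ∈ chPrin σ f F) :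
    avg σ f F ≠ ⊤ := by
  intro hA
  have h := hF₀.2.1
  rw [hA, ENNReal.mul_top two_ne_zero] at h
  exact not_top_lt h

lemma avg_ne_zero_of_mem_chPrin {F F₀ : DyadicCube n} (hF : σ F.carrier ≠ ⊤)
    (hF₀ : F₀ ∈ chPrin σ f F) : avg σ f F ≠ 0 := by
  intro hA
  have hF_int : ∫⁻ x in F.carrier, ENNReal.ofReal (f x) ∂σ = 0 := by
    rw [setLIntegral_eq_avg_mul hF, hA, zero_mul]
  have hF₀_int : ∫⁻ x in F₀.carrier, ENNReal.ofReal (f x) ∂σ = 0 :=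
    le_antisymm (hF_int ▸ lintegral_mono_set hF₀.1) zero_le
  have h := hF₀.2.1
  rw [hA, mul_zero, avg, hF₀_int, mul_zero] at h
  exact lt_irrefl 0 h

end Averages

end DyadicCube

open DyadicCube

theorem sum_measure_children_le_general (n : ℕ) (σ : Measure (RN n)) (f : RN n → ℝ)
    (F : DyadicCube n) :
    ∑' F' : chPrin σ f F, σ F'.1.carrier ≤ σ F.carrier / 2 := by
  by_cases hF : σ F.carrier = ⊤
  · simp [hF, ENNReal.top_div]
  obtain hempty | ⟨F₀, hF₀⟩ := (chPrin σ f F).eq_empty_or_nonempty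
  · simp [hempty]
  have hsum := two_mul_avg_mul_tsum_measure_chPrin_le (f := f) hF
  rw [setLIntegral_eq_avg_mul hF, mul_comm 2, mul_assoc,
    ENNReal.mul_le_mul_iff_right (avg_ne_zero_of_mem_chPrin hF hF₀)
      (avg_ne_top_of_mem_chPrin hF₀)] at hsum
  rw [ENNReal.le_div_iff_mul_le (Or.inl two_ne_zero) (Or.inl ofNat_ne_top), mul_comm]
  exact hsum

/-- For every principal cube `F`, the principal children of `F` satisfy
`∑_{F' ∈ ch_F(F)} σ(F') ≤ σ(F)/2`. -/
theorem sum_measure_children_le (n : ℕ) (σ : Measure (RN n)) (Q₀ : DyadicCube n)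
    (p : ℝ≥0∞) (f : RN n → ℝ) (hf : MemLp f p σ) (hf0 : ∀ x, 0 ≤ f x)
    (hsupp : Function.support f ⊆ Q₀.carrier)
    (F : DyadicCube n) (hF : F ∈ principal σ f Q₀) :
    ∑' F' : chPrin σ f F, σ F'.1.carrier ≤ σ F.carrier / 2 :=
  sum_measure_children_le_general n σ f F
end
end

section
/- Let 1 < p < ∞, let σ be a positive Borel measure on ℝⁿ, let Q₀ be a dyadic cube, let f ∈ L^p(dσ) be nonnegative and supported in Q₀, and let F be the collection of principal cubes for the pair (f,σ). Then ∑_{F ∈ F} (⨍_F f dσ)^p σ(F) ≤ C ‖f‖_{L^p(dσ)}^p, where C depends only on p. -/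
open MeasureTheory ENNReal Set
open scoped BigOperators NNReal

noncomputable section

/-!
Principal cubes whose carriers meet are nested, and along a chain of nested principal cubes the
averages of `f` more than double at each step. Hence the principal cubes whose average lies in a
fixed band `[2t, 4t)` are pairwise disjoint. On each of them the points where `f < t` carry at most
half of `∫_F f dσ`, so `σ(F) ≤ t⁻¹ ∫_{F ∩ {f ≥ t}} f dσ`, and the band contributes at most
`4^p t^(p-1) ∫_{f ≥ t} f dσ`. Summing over `t = 2^k`, the weights `t^(p-1)` with `t ≤ f(x)` form a
geometric series bounded by a multiple of `f(x)^(p-1)`, which leaves `C_p ∫ f^p dσ`.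
-/

namespace ENNReal

lemma two_mul_two_zpow (k : ℤ) : 2 * (2 : ℝ≥0∞) ^ k = 2 ^ (k + 1) := by
  rw [ENNReal.zpow_add two_ne_zero ofNat_ne_top, zpow_one, mul_comm]

lemma two_zpow_sub_natCast_rpow (K : ℤ) (j : ℕ) (q : ℝ) :
    ((2 : ℝ≥0∞) ^ (K - j)) ^ q = (2 ^ K) ^ q * ((2 ^ q)⁻¹) ^ j := by
  rw [ENNReal.zpow_sub two_ne_zero ofNat_ne_top, zpow_natCast,
    ENNReal.mul_rpow_of_ne_top (zpow_ne_top two_ne_zero ofNat_ne_top K)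
      (ENNReal.inv_ne_top.2 (pow_ne_zero _ two_ne_zero)), ENNReal.inv_rpow, ← ENNReal.inv_pow,
    ← ENNReal.rpow_natCast_mul, ← ENNReal.rpow_mul_natCast, mul_comm (j : ℝ)]

lemma tsum_ite_two_zpow_rpow_le {q : ℝ} (hq : 0 < q) (y : ℝ≥0∞) :
    ∑' k : ℤ, (if (2 : ℝ≥0∞) ^ k ≤ y then ((2 : ℝ≥0∞) ^ k) ^ q else 0) ≤
      (1 - (2 ^ q)⁻¹)⁻¹ * y ^ q := by
  rcases eq_or_ne y 0 with rfl | hy0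
  · simp [(ENNReal.zpow_pos two_ne_zero ofNat_ne_top _).not_ge]
  rcases eq_or_ne y ⊤ with rfl | hytop
  · rw [ENNReal.top_rpow_of_pos hq, ENNReal.mul_top (ENNReal.inv_ne_zero.2 (by simp))]
    exact le_top
  obtain ⟨K, hK, hK'⟩ := exists_mem_Ico_zpow hy0 hytop one_lt_two ofNat_ne_top
  have hle : ∀ k : ℤ, (2 : ℝ≥0∞) ^ k ≤ y → k ≤ K := fun k hk => by
    by_contra! h
    exact (hK'.trans_le ((zpow_le_of_le one_le_two h).trans hk)).false
  calc ∑' k : ℤ, (if (2 : ℝ≥0∞) ^ k ≤ y then ((2 : ℝ≥0∞) ^ k) ^ q else 0)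
      ≤ ∑' k : ℤ, (if k ≤ K then ((2 : ℝ≥0∞) ^ k) ^ q else 0) :=
        ENNReal.tsum_le_tsum fun k => by
          by_cases h : (2 : ℝ≥0∞) ^ k ≤ y
          · rw [if_pos h, if_pos (hle k h)]
          · rw [if_neg h]; exact zero_le
    _ = ∑' j : ℕ, ((2 : ℝ≥0∞) ^ (K - j)) ^ q := by
        have hinj : Function.Injective fun j : ℕ => K - j := fun a b h => by simpa using h
        rw [← hinj.tsum_eq]
        · simp
        · intro k hk
          have : k ≤ K := by by_contra h; exact hk (if_neg h)
          exact ⟨(K - k).toNat, by simp only; omega⟩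
    _ = (2 ^ K) ^ q * (1 - (2 ^ q)⁻¹)⁻¹ := by
        simp only [two_zpow_sub_natCast_rpow, ENNReal.tsum_mul_left, ENNReal.tsum_geometric]
    _ ≤ (1 - (2 ^ q)⁻¹)⁻¹ * y ^ q := by
        rw [mul_comm]; gcongr

lemma le_one_add_rpow {p : ℝ} (hp : 1 ≤ p) (x : ℝ≥0∞) : x ≤ 1 + x ^ p := by
  rcases le_total x 1 with hx | hx
  · exact hx.trans le_self_add
  · calc x = x ^ (1 : ℝ) := (ENNReal.rpow_one x).symm
      _ ≤ x ^ p := ENNReal.rpow_le_rpow_of_exponent_le hx hp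
      _ ≤ 1 + x ^ p := le_add_self

lemma rpow_mul_le_tsum_ite {x : ℝ≥0∞} (hx : x ≠ ⊤) {p : ℝ} (hp : 0 < p) (m : ℝ≥0∞) :
    x ^ p * m ≤ ∑' k : ℤ, if 2 * 2 ^ k ≤ x ∧ x < 4 * 2 ^ k then x ^ p * m else 0 := by
  rcases eq_or_ne x 0 with rfl | hx0
  · simp [ENNReal.zero_rpow_of_pos hp]
  obtain ⟨k, hk, hk'⟩ := exists_mem_Ico_zpow hx0 hx one_lt_two ofNat_ne_top
  have h2 : 2 * (2 : ℝ≥0∞) ^ (k - 1) = 2 ^ k := by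
    rw [ENNReal.two_mul_two_zpow, sub_add_cancel]
  refine le_trans (le_of_eq (if_pos ⟨?_, ?_⟩).symm) (ENNReal.le_tsum (k - 1))
  · rwa [h2]
  · rwa [show (4 : ℝ≥0∞) = 2 * 2 by norm_num, mul_assoc, h2, ENNReal.two_mul_two_zpow]

end ENNReal

section Carleson

variable {ι α : Type*} [MeasurableSpace α] {σ : Measure α} {g : α → ℝ≥0∞}

lemma mul_measure_le_setLIntegral_inter_of_two_mul_le_setLAverage (hg : Measurable g)
    {s : Set α} {t : ℝ≥0∞} (hs : σ s ≠ ⊤) (ht : t ≠ ⊤) (h : 2 * t ≤ ⨍⁻ x in s, g x ∂σ) :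
    t * σ s ≤ ∫⁻ x in s ∩ {x | t ≤ g x}, g x ∂σ := by
  have hsmall : ∫⁻ x in s \ {x | t ≤ g x}, g x ∂σ ≤ t * σ s :=
    calc ∫⁻ x in s \ {x | t ≤ g x}, g x ∂σ ≤ ∫⁻ _ in s \ {x | t ≤ g x}, t ∂σ :=
          setLIntegral_mono measurable_const fun x hx => (not_le.1 hx.2).le
      _ ≤ t * σ s := by rw [setLIntegral_const]; gcongr; exact sdiff_subset
  refine ENNReal.le_of_add_le_add_right (ENNReal.mul_ne_top ht hs) ?_
  calc t * σ s + t * σ s = 2 * t * σ s := by ring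
    _ ≤ σ s * ⨍⁻ x in s, g x ∂σ := by rw [mul_comm]; gcongr
    _ = ∫⁻ x in s ∩ {x | t ≤ g x}, g x ∂σ + ∫⁻ x in s \ {x | t ≤ g x}, g x ∂σ := by
        rw [measure_mul_setLAverage _ hs,
          lintegral_inter_add_sdiff _ _ (measurableSet_le measurable_const hg)]
    _ ≤ _ := by gcongr

lemma setLAverage_rpow_mul_measure_le (hg : Measurable g) {s : Set α} {t : ℝ≥0∞} {p : ℝ}
    (hp : 0 ≤ p) (ht0 : t ≠ 0) (ht : t ≠ ⊤) (h2 : 2 * t ≤ ⨍⁻ x in s, g x ∂σ)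
    (h4 : ⨍⁻ x in s, g x ∂σ < 4 * t) :
    (⨍⁻ x in s, g x ∂σ) ^ p * σ s ≤ 4 ^ p * t ^ (p - 1) * ∫⁻ x in s ∩ {x | t ≤ g x}, g x ∂σ := by
  have hs : σ s ≠ ⊤ := by
    intro hs
    rw [setLAverage_eq, hs, ENNReal.div_top, nonpos_iff_eq_zero, mul_eq_zero] at h2
    simp_all
  calc (⨍⁻ x in s, g x ∂σ) ^ p * σ s ≤ (4 * t) ^ p * σ s := by gcongr
    _ = 4 ^ p * t ^ (p - 1) * (t * σ s) := by
        have htp : t ^ p = t ^ (p - 1) * t := by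
          simpa using ENNReal.rpow_add (p - 1) 1 ht0 ht
        rw [ENNReal.mul_rpow_of_nonneg _ _ hp, htp]
        ring
    _ ≤ _ := by
        gcongr
        exact mul_measure_le_setLIntegral_inter_of_two_mul_le_setLAverage hg hs ht h2

def AverageSeparated (σ : Measure α) (g : α → ℝ≥0∞) (s : ι → Set α) : Prop :=
  Pairwise fun i j => ¬Disjoint (s i) (s j) →
    2 * ⨍⁻ x in s i, g x ∂σ < ⨍⁻ x in s j, g x ∂σ ∨ 2 * ⨍⁻ x in s j, g x ∂σ < ⨍⁻ x in s i, g x ∂σ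

variable {s : ι → Set α}

lemma AverageSeparated.disjoint (hsep : AverageSeparated σ g s) {i j : ι} (hij : i ≠ j)
    {t : ℝ≥0∞} (hi : 2 * t ≤ ⨍⁻ x in s i, g x ∂σ) (hi' : ⨍⁻ x in s i, g x ∂σ < 4 * t)
    (hj : 2 * t ≤ ⨍⁻ x in s j, g x ∂σ) (hj' : ⨍⁻ x in s j, g x ∂σ < 4 * t) :
    Disjoint (s i) (s j) := by
  have h4 : (4 : ℝ≥0∞) * t = 2 * (2 * t) := by rw [← mul_assoc]; norm_num
  by_contra hd
  rcases hsep hij hd with h | h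
  · exact (h.trans (hj'.trans_le (h4 ▸ by gcongr))).false
  · exact (h.trans (hi'.trans_le (h4 ▸ by gcongr))).false

lemma AverageSeparated.tsum_ite_le (hsep : AverageSeparated σ g s) (hg : Measurable g)
    (hs : ∀ i, MeasurableSet (s i)) {t : ℝ≥0∞} (ht0 : t ≠ 0) (ht : t ≠ ⊤) {p : ℝ} (hp : 0 ≤ p) :
    ∑' i, (if 2 * t ≤ ⨍⁻ x in s i, g x ∂σ ∧ ⨍⁻ x in s i, g x ∂σ < 4 * t then
        (⨍⁻ x in s i, g x ∂σ) ^ p * σ (s i) else 0) ≤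
      4 ^ p * t ^ (p - 1) * ∫⁻ x in {x | t ≤ g x}, g x ∂σ := by
  have hA : MeasurableSet {x | t ≤ g x} := measurableSet_le measurable_const hg
  set band := {i | 2 * t ≤ ⨍⁻ x in s i, g x ∂σ ∧ ⨍⁻ x in s i, g x ∂σ < 4 * t}
  calc ∑' i, (if 2 * t ≤ ⨍⁻ x in s i, g x ∂σ ∧ ⨍⁻ x in s i, g x ∂σ < 4 * t then
        (⨍⁻ x in s i, g x ∂σ) ^ p * σ (s i) else 0)
      = ∑' i : band, (⨍⁻ x in s i, g x ∂σ) ^ p * σ (s i) := by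
        rw [tsum_subtype band fun i => (⨍⁻ x in s i, g x ∂σ) ^ p * σ (s i)]
        simp only [indicator_apply, band, mem_ofPred_eq]
    _ ≤ ∑' i : band, 4 ^ p * t ^ (p - 1) * σ.withDensity g (s i ∩ {x | t ≤ g x}) :=
        ENNReal.tsum_le_tsum fun i => by
          rw [withDensity_apply _ ((hs i).inter hA)]
          exact setLAverage_rpow_mul_measure_le hg hp ht0 ht i.2.1 i.2.2
    _ ≤ 4 ^ p * t ^ (p - 1) * σ.withDensity g (⋃ i : band, s i ∩ {x | t ≤ g x}) := by
        rw [ENNReal.tsum_mul_left]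
        gcongr
        refine tsum_meas_le_meas_iUnion_of_disjoint _ (fun i => (hs i).inter hA) fun i j hij => ?_
        exact (hsep.disjoint (Subtype.coe_injective.ne hij) i.2.1 i.2.2 j.2.1 j.2.2).mono
          inter_subset_left inter_subset_left
    _ ≤ 4 ^ p * t ^ (p - 1) * ∫⁻ x in {x | t ≤ g x}, g x ∂σ := by
        rw [← withDensity_apply _ hA]
        gcongr
        exact iUnion_subset fun i => inter_subset_right

lemma setLAverage_ne_top_of_lintegral_rpow_ne_top {p : ℝ} (hp : 1 ≤ p)
    (h : ∫⁻ x, g x ^ p ∂σ ≠ ⊤) (t : Set α) : ⨍⁻ x in t, g x ∂σ ≠ ⊤ := by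
  rcases eq_or_ne (σ t) ⊤ with ht | ht
  · simp [setLAverage_eq, ht]
  refine (setLAverage_lt_top (ne_top_of_le_ne_top ?_
    (lintegral_mono fun x => ENNReal.le_one_add_rpow hp (g x)))).ne
  rw [lintegral_add_left measurable_const]
  simpa [ht] using ne_top_of_le_ne_top h (setLIntegral_le_lintegral _ _)

lemma tsum_two_zpow_rpow_mul_setLIntegral_le (hg : Measurable g) {q : ℝ} (hq : 0 < q) :
    ∑' k : ℤ, ((2 : ℝ≥0∞) ^ k) ^ q * ∫⁻ x in {x | 2 ^ k ≤ g x}, g x ∂σ ≤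
      (1 - (2 ^ q)⁻¹)⁻¹ * ∫⁻ x, g x ^ (q + 1) ∂σ := by
  have hA : ∀ k : ℤ, MeasurableSet {x | (2 : ℝ≥0∞) ^ k ≤ g x} :=
    fun k => measurableSet_le measurable_const hg
  calc ∑' k : ℤ, ((2 : ℝ≥0∞) ^ k) ^ q * ∫⁻ x in {x | 2 ^ k ≤ g x}, g x ∂σ
      = ∫⁻ x, (∑' k : ℤ, if (2 : ℝ≥0∞) ^ k ≤ g x then ((2 : ℝ≥0∞) ^ k) ^ q else 0) * g x ∂σ := by
        simp_rw [← ENNReal.tsum_mul_right, ite_mul, zero_mul]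
        rw [lintegral_tsum]
        · congr 1; ext k
          rw [← lintegral_indicator (hA k), ← lintegral_const_mul _ (hg.indicator (hA k))]
          congr 1; ext x
          simp only [indicator_apply, mem_ofPred_eq, mul_ite, mul_zero]
        · intro k
          exact (Measurable.ite (hA k) (measurable_const.mul hg) measurable_const).aemeasurable
    _ ≤ ∫⁻ x, (1 - (2 ^ q)⁻¹)⁻¹ * g x ^ q * g x ∂σ :=
        lintegral_mono fun x => by gcongr; exact ENNReal.tsum_ite_two_zpow_rpow_le hq (g x)
    _ = (1 - (2 ^ q)⁻¹)⁻¹ * ∫⁻ x, g x ^ (q + 1) ∂σ := by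
        rw [← lintegral_const_mul _ (hg.pow_const _)]
        congr 1; ext x
        rw [ENNReal.rpow_add_of_nonneg _ _ hq.le zero_le_one, ENNReal.rpow_one, mul_assoc]

def carlesonConst (p : ℝ) : ℝ≥0∞ := 4 ^ p * (1 - (2 ^ (p - 1))⁻¹)⁻¹

lemma carlesonConst_ne_zero (p : ℝ) : carlesonConst p ≠ 0 :=
  mul_ne_zero (by simp) (ENNReal.inv_ne_zero.2 (ne_top_of_le_ne_top one_ne_top tsub_le_self))

lemma carlesonConst_ne_top {p : ℝ} (hp : 1 < p) : carlesonConst p ≠ ⊤ := by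
  refine ENNReal.mul_ne_top (by simp) (ENNReal.inv_ne_top.2 ?_)
  refine (tsub_pos_of_lt (ENNReal.inv_lt_one.2 ?_)).ne'
  exact ENNReal.one_lt_rpow one_lt_two (by linarith)

lemma AverageSeparated.tsum_rpow_mul_le_of_measurable (hsep : AverageSeparated σ g s)
    (hg : Measurable g) (hs : ∀ i, MeasurableSet (s i)) {p : ℝ} (hp : 1 < p) :
    ∑' i, (⨍⁻ x in s i, g x ∂σ) ^ p * σ (s i) ≤ carlesonConst p * ∫⁻ x, g x ^ p ∂σ := by
  rcases eq_or_ne (∫⁻ x, g x ^ p ∂σ) ⊤ with hN | hN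
  · rw [hN, ENNReal.mul_top (carlesonConst_ne_zero p)]
    exact le_top
  have h2k0 : ∀ k : ℤ, (2 : ℝ≥0∞) ^ k ≠ 0 := fun k => (zpow_pos two_ne_zero ofNat_ne_top k).ne'
  have h2kt : ∀ k : ℤ, (2 : ℝ≥0∞) ^ k ≠ ⊤ := zpow_ne_top two_ne_zero ofNat_ne_top
  calc ∑' i, (⨍⁻ x in s i, g x ∂σ) ^ p * σ (s i)
      ≤ ∑' i, ∑' k : ℤ, (if 2 * 2 ^ k ≤ ⨍⁻ x in s i, g x ∂σ ∧ ⨍⁻ x in s i, g x ∂σ < 4 * 2 ^ k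
          then (⨍⁻ x in s i, g x ∂σ) ^ p * σ (s i) else 0) :=
        ENNReal.tsum_le_tsum fun i => ENNReal.rpow_mul_le_tsum_ite
          (setLAverage_ne_top_of_lintegral_rpow_ne_top hp.le hN (s i)) (by linarith) _
    _ = ∑' k : ℤ, ∑' i, (if 2 * 2 ^ k ≤ ⨍⁻ x in s i, g x ∂σ ∧ ⨍⁻ x in s i, g x ∂σ < 4 * 2 ^ k
          then (⨍⁻ x in s i, g x ∂σ) ^ p * σ (s i) else 0) := ENNReal.tsum_comm
    _ ≤ ∑' k : ℤ, 4 ^ p * (((2 : ℝ≥0∞) ^ k) ^ (p - 1) * ∫⁻ x in {x | 2 ^ k ≤ g x}, g x ∂σ) :=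
        ENNReal.tsum_le_tsum fun k =>
          (hsep.tsum_ite_le hg hs (h2k0 k) (h2kt k) (by linarith)).trans_eq (mul_assoc _ _ _)
    _ ≤ 4 ^ p * ((1 - (2 ^ (p - 1))⁻¹)⁻¹ * ∫⁻ x, g x ^ (p - 1 + 1) ∂σ) := by
        rw [ENNReal.tsum_mul_left]
        gcongr
        exact tsum_two_zpow_rpow_mul_setLIntegral_le hg (by linarith)
    _ = carlesonConst p * ∫⁻ x, g x ^ p ∂σ := by rw [sub_add_cancel, carlesonConst, mul_assoc]

theorem AverageSeparated.tsum_rpow_mul_le (hsep : AverageSeparated σ g s)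
    (hg : AEMeasurable g σ) (hs : ∀ i, MeasurableSet (s i)) {p : ℝ} (hp : 1 < p) :
    ∑' i, (⨍⁻ x in s i, g x ∂σ) ^ p * σ (s i) ≤ carlesonConst p * ∫⁻ x, g x ^ p ∂σ := by
  have havg : ∀ t : Set α, ⨍⁻ x in t, g x ∂σ = ⨍⁻ x in t, hg.mk g x ∂σ :=
    fun t => laverage_congr (ae_restrict_of_ae hg.ae_eq_mk)
  have hsep' : AverageSeparated σ (hg.mk g) s := by simpa only [AverageSeparated, havg] using hsep
  rw [lintegral_congr_ae (hg.ae_eq_mk.mono fun x hx => congrArg (· ^ p) hx)]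
  simpa only [havg] using hsep'.tsum_rpow_mul_le_of_measurable hg.measurable_mk hs hp

end Carleson

lemma Int.floor_mul_two_zpow_of_le {j k : ℤ} (h : j ≤ k) (a : ℝ) :
    ⌊a * 2 ^ j⌋ = ⌊a * 2 ^ k⌋ / 2 ^ (k - j).toNat := by
  have hN : (((2 : ℤ) ^ (k - j).toNat : ℤ) : ℝ) = 2 ^ (k - j) := by
    rw [Int.cast_pow, Int.cast_ofNat, ← zpow_natCast, Int.toNat_of_nonneg (sub_nonneg.2 h)]
  rw [← Int.floor_div_cast_of_nonneg (by positivity), hN, zpow_sub₀ two_ne_zero]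
  field_simp

namespace DyadicCube

variable {n : ℕ}

lemma mem_carrier_iff {Q : DyadicCube n} {x : RN n} :
    x ∈ Q.carrier ↔ ∀ i, ⌊x i * 2 ^ Q.k⌋ = Q.m i := by
  have h2 : (0 : ℝ) < 2 ^ Q.k := zpow_pos two_pos _
  simp only [carrier, mem_ofPred_eq, Int.floor_eq_iff, zpow_neg, ← div_eq_mul_inv,
    div_le_iff₀ h2, lt_div_iff₀ h2]

lemma carrier_nonempty (Q : DyadicCube n) : Q.carrier.Nonempty :=
  ⟨fun i => Q.m i * 2 ^ (-Q.k), mem_carrier_iff.2 fun i => by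
    rw [zpow_neg, inv_mul_cancel_right₀ (zpow_ne_zero _ two_ne_zero), Int.floor_intCast]⟩

lemma carrier_subset_of_k_le_s6 {Q R : DyadicCube n} (hk : R.k ≤ Q.k)
    (h : ¬Disjoint Q.carrier R.carrier) : Q.carrier ⊆ R.carrier := by
  obtain ⟨x, hxQ, hxR⟩ := not_disjoint_iff.1 h
  intro y hy
  rw [mem_carrier_iff] at hxQ hxR hy ⊢
  intro i
  rw [Int.floor_mul_two_zpow_of_le hk, hy i, ← hxQ i, ← Int.floor_mul_two_zpow_of_le hk, hxR i]

lemma carrier_subset_or_subset {Q R : DyadicCube n} (h : ¬Disjoint Q.carrier R.carrier) :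
    Q.carrier ⊆ R.carrier ∨ R.carrier ⊆ Q.carrier := by
  rcases le_total R.k Q.k with hk | hk
  · exact Or.inl (carrier_subset_of_k_le_s6 hk h)
  · exact Or.inr (carrier_subset_of_k_le_s6 hk (fun h' => h h'.symm))

lemma avg_eq_setLAverage (σ : Measure (RN n)) (f : RN n → ℝ) (Q : DyadicCube n) :
    avg σ f Q = ⨍⁻ x in Q.carrier, ENNReal.ofReal (f x) ∂σ := by
  rw [setLAverage_eq, avg, div_eq_mul_inv, mul_comm]

variable {σ : Measure (RN n)} {f : RN n → ℝ} {Q₀ : DyadicCube n}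

lemma carrier_ne_of_mem_chPrin {F Q : DyadicCube n} (hQ : Q ∈ chPrin σ f F) :
    Q.carrier ≠ F.carrier := by
  intro h
  have havg : avg σ f Q = avg σ f F := by simp only [avg, h]
  exact (havg ▸ hQ.2.1).not_ge (le_mul_of_one_le_left zero_le one_le_two)

lemma carrier_subset_of_mem_prinLevel {m : ℕ} {F : DyadicCube n}
    (hF : F ∈ prinLevel σ f Q₀ m) : F.carrier ⊆ Q₀.carrier := by
  induction m generalizing F with
  | zero =>
    obtain rfl : F = Q₀ := hF
    exact subset_rfl
  | succ m ih =>
    obtain ⟨P, hP, hFP⟩ := mem_iUnion₂.1 hF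
    exact hFP.1.trans (ih hP)

lemma eq_or_two_mul_avg_lt_of_mem_prinLevel {m j : ℕ} {G F : DyadicCube n}
    (hG : G ∈ prinLevel σ f Q₀ m) (hF : F ∈ prinLevel σ f Q₀ j) (hGF : G.carrier ⊆ F.carrier) :
    F = G ∨ 2 * avg σ f F < avg σ f G := by
  induction hN : m + j using Nat.strong_induction_on generalizing m j G F with
  | _ N ih =>
  cases m with
  | zero =>
    obtain rfl : G = Q₀ := hG
    cases j with
    | zero => exact Or.inl hF
    | succ j =>
      obtain ⟨P, hP, hFP⟩ := mem_iUnion₂.1 hF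
      exact absurd (hFP.1.antisymm ((carrier_subset_of_mem_prinLevel hP).trans hGF))
        (carrier_ne_of_mem_chPrin hFP)
  | succ m =>
    obtain ⟨P, hP, hGP, hGavg, hGmax⟩ := mem_iUnion₂.1 hG
    have hmeet : ¬Disjoint F.carrier P.carrier := by
      obtain ⟨x, hx⟩ := G.carrier_nonempty
      exact not_disjoint_iff.2 ⟨x, hGF hx, hGP hx⟩
    rcases carrier_subset_or_subset hmeet with hFP | hPF
    · rcases ih (j + m) (by omega) hF hP hFP rfl with rfl | hlt
      · exact Or.inr hGavg
      -- `F` lies between `G` and `P` and already beats `2 ⨍_P f`, so maximality of `G` gives `F = G`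
      · exact Or.inl (hGmax F hFP hGF hlt)
    · rcases ih (m + j) (by omega) hP hF hPF rfl with rfl | hlt
      · exact Or.inr hGavg
      · exact Or.inr ((hlt.trans_le (le_mul_of_one_le_left zero_le one_le_two)).trans hGavg)

lemma averageSeparated_principal (σ : Measure (RN n)) (f : RN n → ℝ) (Q₀ : DyadicCube n) :
    AverageSeparated σ (fun x => ENNReal.ofReal (f x)) fun F : principal σ f Q₀ => F.1.carrier := by
  rintro ⟨F, hF⟩ ⟨G, hG⟩ hne hd
  simp only [← avg_eq_setLAverage]
  obtain ⟨j, hF⟩ := mem_iUnion.1 hF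
  obtain ⟨m, hG⟩ := mem_iUnion.1 hG
  have hne : F ≠ G := fun h => hne (Subtype.ext h)
  rcases carrier_subset_or_subset hd with hFG | hGF
  · exact Or.inr ((eq_or_two_mul_avg_lt_of_mem_prinLevel hF hG hFG).resolve_left hne.symm)
  · exact Or.inl ((eq_or_two_mul_avg_lt_of_mem_prinLevel hG hF hGF).resolve_left hne)

end DyadicCube

open DyadicCube
/-- The Carleson embedding estimate for principal cubes:
`∑_{F ∈ F} (⨍_F f dσ)^p σ(F) ≤ C ‖f‖_{L^p(σ)}^p` with `C` depending only on `p`. -/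
theorem sum_principal_avg_pow_le (p : ℝ) (hp₁ : 1 < p) :
    ∃ C : ℝ≥0, 0 < C ∧
      ∀ (n : ℕ) (σ : Measure (RN n)) (Q₀ : DyadicCube n) (f : RN n → ℝ),
        MemLp f (ENNReal.ofReal p) σ → (∀ x, 0 ≤ f x) →
        Function.support f ⊆ Q₀.carrier →
        ∑' F : principal σ f Q₀, avg σ f F.1 ^ p * σ F.1.carrier ≤
          C * eLpNorm f (ENNReal.ofReal p) σ ^ p := by
  refine ⟨(carlesonConst p).toNNReal,
    ENNReal.toNNReal_pos (carlesonConst_ne_zero p) (carlesonConst_ne_top hp₁), ?_⟩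
  intro n σ Q₀ f hf _ _
  have hp₀ : 0 < p := one_pos.trans hp₁
  have hnorm : eLpNorm f (ENNReal.ofReal p) σ ^ p = ∫⁻ x, ‖f x‖ₑ ^ p ∂σ := by
    have h := eLpNorm_nnreal_pow_eq_lintegral (f := f) (μ := σ) (Real.toNNReal_pos.2 hp₀).ne'
    rwa [Real.coe_toNNReal _ hp₀.le] at h
  rw [ENNReal.coe_toNNReal (carlesonConst_ne_top hp₁), hnorm]
  calc ∑' F : principal σ f Q₀, avg σ f F.1 ^ p * σ F.1.carrier
      ≤ carlesonConst p * ∫⁻ x, ENNReal.ofReal (f x) ^ p ∂σ := by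
        simpa only [avg_eq_setLAverage] using (averageSeparated_principal σ f Q₀).tsum_rpow_mul_le
          hf.1.aemeasurable.ennreal_ofReal (fun F => measurableSet_carrier F.1) hp₁
    _ ≤ carlesonConst p * ∫⁻ x, ‖f x‖ₑ ^ p ∂σ := by
        gcongr with x
        exact Real.ofReal_le_enorm (f x)
end
end
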